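/- arXiv:1710.10919 — 3 statements merged into one kernel-verified Lean document; each statement's English description precedes it below -/
import Mathlib

section
/- Let p, m ≥ 1, γ ∈ ℕ with γ ≥ 1, y_1, …, y_m ∈ ℝ^p, and g ∈ ℝ^m. Then the function f : ℝ^p → ℝ defined by f(z) = (1 + ‖z‖^2)^γ − 2 Σ_{i=1}^m g_i (1 + ⟨y_i, z⟩)^γ is coercive: f(z) → +∞ as ‖z‖ → ∞ (i.e., f tends to +∞ along the cocompact filter of ℝ^p). -/
open RealInnerProductSpace Filter Bornology

/-!
With `t = 1 + ‖z‖`, Cauchy–Schwarz gives `|1 + ⟪yᵢ, z⟫| ≤ (1 + ‖yᵢ‖) t`, so the kernel sum is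
`O(t^γ)`, while `t² ≤ 2 (1 + ‖z‖²)` makes the leading term at least `t^(2γ) / 2^γ`.
Hence `f(z) ≥ t^(2γ) / 2^γ - K t^γ`, which tends to `+∞` with `t` as soon as `γ ≥ 1`.
-/

lemma one_add_pow_sq_le (r : ℝ) (γ : ℕ) : ((1 + r) ^ γ) ^ 2 ≤ 2 ^ γ * (1 + r ^ 2) ^ γ :=
  calc ((1 + r) ^ γ) ^ 2 = ((1 + r) ^ 2) ^ γ := by rw [← pow_mul, ← pow_mul, mul_comm]
    _ ≤ (2 * (1 + r ^ 2)) ^ γ := by gcongr; simpa using add_sq_le (a := (1 : ℝ)) (b := r)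
    _ = 2 ^ γ * (1 + r ^ 2) ^ γ := mul_pow _ _ _

lemma tendsto_sq_div_sub_mul_atTop {a : ℝ} (ha : 0 < a) (K : ℝ) :
    Tendsto (fun s : ℝ => s ^ 2 / a - K * s) atTop atTop := by
  have h : Tendsto (fun s : ℝ => s * (s / a + -K)) atTop atTop :=
    tendsto_id.atTop_mul_atTop₀ <|
      tendsto_atTop_add_const_right _ (-K) (tendsto_id.atTop_div_const ha)
  exact h.congr fun s => by ring

section InnerProductSpace

variable {E : Type*} [NormedAddCommGroup E] [InnerProductSpace ℝ E]

lemma abs_one_add_real_inner_le (x z : E) : |1 + ⟪x, z⟫| ≤ (1 + ‖x‖) * (1 + ‖z‖) := by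
  have hcs := abs_real_inner_le_norm x z
  calc |1 + ⟪x, z⟫| ≤ 1 + ‖x‖ * ‖z‖ := (abs_add_le _ _).trans (by rw [abs_one]; linarith)
    _ ≤ (1 + ‖x‖) * (1 + ‖z‖) := by nlinarith [norm_nonneg x, norm_nonneg z]

lemma sum_mul_one_add_real_inner_pow_le {ι : Type*} (s : Finset ι) (y : ι → E) (g : ι → ℝ)
    (γ : ℕ) (z : E) :
    ∑ i ∈ s, g i * (1 + ⟪y i, z⟫) ^ γ ≤ (∑ i ∈ s, |g i| * (1 + ‖y i‖) ^ γ) * (1 + ‖z‖) ^ γ := by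
  rw [Finset.sum_mul]
  refine Finset.sum_le_sum fun i _ => ?_
  calc g i * (1 + ⟪y i, z⟫) ^ γ ≤ |g i| * |1 + ⟪y i, z⟫| ^ γ := by
        rw [← abs_pow, ← abs_mul]; exact le_abs_self _
    _ ≤ |g i| * ((1 + ‖y i‖) * (1 + ‖z‖)) ^ γ := by
        gcongr; exact abs_one_add_real_inner_le _ _
    _ = |g i| * (1 + ‖y i‖) ^ γ * (1 + ‖z‖) ^ γ := by rw [mul_pow, mul_assoc]

theorem tendsto_one_add_norm_sq_pow_sub_sum_cobounded {ι : Type*} [Fintype ι] (y : ι → E)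
    (g : ι → ℝ) {γ : ℕ} (hγ : γ ≠ 0) :
    Tendsto (fun z : E => (1 + ‖z‖ ^ 2) ^ γ - 2 * ∑ i, g i * (1 + ⟪y i, z⟫) ^ γ)
      (cobounded E) atTop := by
  set C := ∑ i, |g i| * (1 + ‖y i‖) ^ γ
  have hT : Tendsto (fun z : E => (1 + ‖z‖) ^ γ) (cobounded E) atTop :=
    (tendsto_pow_atTop hγ).comp (tendsto_atTop_add_const_left _ 1 tendsto_norm_cobounded_atTop)
  refine tendsto_atTop_mono (fun z => ?_)
    ((tendsto_sq_div_sub_mul_atTop (by positivity : (0 : ℝ) < 2 ^ γ) (2 * C)).comp hT)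
  have hlead : ((1 + ‖z‖) ^ γ) ^ 2 / 2 ^ γ ≤ (1 + ‖z‖ ^ 2) ^ γ := by
    rw [div_le_iff₀ (by positivity), mul_comm]
    exact one_add_pow_sq_le _ _
  have hsum := sum_mul_one_add_real_inner_pow_le Finset.univ y g γ z
  simp only [Function.comp_apply]
  linarith

end InnerProductSpace

theorem stmt5_general (p m : ℕ) (γ : ℕ) (hγ : 1 ≤ γ)
    (y : Fin m → EuclideanSpace ℝ (Fin p)) (g : Fin m → ℝ) :
    Tendsto (fun z : EuclideanSpace ℝ (Fin p) =>
        (1 + ‖z‖ ^ 2) ^ γ - 2 * ∑ i, g i * (1 + ⟪y i, z⟫) ^ γ)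
      (cocompact (EuclideanSpace ℝ (Fin p))) atTop := by
  rw [← Metric.cobounded_eq_cocompact]
  exact tendsto_one_add_norm_sq_pow_sub_sum_cobounded y g (Nat.one_le_iff_ne_zero.mp hγ)

/-- The polynomial-kernel objective `f(z) = (1 + ‖z‖²)^γ − 2 Σᵢ gᵢ (1 + ⟪yᵢ, z⟫)^γ`
is coercive: it tends to `+∞` along the cocompact filter of `ℝ^p`. -/
theorem stmt5 (p m : ℕ) (hp : 1 ≤ p) (hm : 1 ≤ m) (γ : ℕ) (hγ : 1 ≤ γ)
    (y : Fin m → EuclideanSpace ℝ (Fin p)) (g : Fin m → ℝ) :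
    Tendsto (fun z : EuclideanSpace ℝ (Fin p) =>
        (1 + ‖z‖ ^ 2) ^ γ - 2 * ∑ i, g i * (1 + ⟪y i, z⟫) ^ γ)
      (cocompact (EuclideanSpace ℝ (Fin p))) atTop :=
  stmt5_general p m γ hγ y g
end

section
/- Let p, m ≥ 1, γ ∈ ℕ with γ ≥ 1, y_1, …, y_m ∈ ℝ^p, and g ∈ ℝ^m. Then the function f(z) = (1 + ‖z‖^2)^γ − 2 Σ_{i=1}^m g_i (1 + ⟨y_i, z⟩)^γ attains its infimum over ℝ^p: there exists z* ∈ ℝ^p such that f(z*) ≤ f(z) for all z ∈ ℝ^p. -/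
open RealInnerProductSpace

/-- The polynomial-kernel objective `f(z) = (1 + ‖z‖²)^γ − 2 Σᵢ gᵢ (1 + ⟪yᵢ, z⟫)^γ`
attains its infimum over `ℝ^p`. -/
theorem stmt6 (p m : ℕ) (hp : 1 ≤ p) (hm : 1 ≤ m) (γ : ℕ) (hγ : 1 ≤ γ)
    (y : Fin m → EuclideanSpace ℝ (Fin p)) (g : Fin m → ℝ) :
    ∃ zs : EuclideanSpace ℝ (Fin p), ∀ z : EuclideanSpace ℝ (Fin p),
      (1 + ‖zs‖ ^ 2) ^ γ - 2 * ∑ i, g i * (1 + ⟪y i, zs⟫) ^ γ ≤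
      (1 + ‖z‖ ^ 2) ^ γ - 2 * ∑ i, g i * (1 + ⟪y i, z⟫) ^ γ := by
  set F : EuclideanSpace ℝ (Fin p) → ℝ :=
    fun z => (1 + ‖z‖ ^ 2) ^ γ - 2 * ∑ i, g i * (1 + ⟪y i, z⟫) ^ γ with hF
  have hcont : Continuous F := by
    apply Continuous.sub
    · exact (continuous_const.add ((continuous_norm).pow 2)).pow γ
    · apply continuous_const.mul
      apply continuous_finset_sum
      intro i _
      exact continuous_const.mul
        ((continuous_const.add (continuous_const.inner continuous_id)).pow γ)
  set C : ℝ := ∑ i, |g i| with hC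
  have hC0 : 0 ≤ C := Finset.sum_nonneg fun i _ => abs_nonneg _
  set K : ℝ := 1 + ∑ i, ‖y i‖ with hK
  have hK1 : (1:ℝ) ≤ K := by
    have : 0 ≤ ∑ i, ‖y i‖ := Finset.sum_nonneg fun i _ => norm_nonneg _
    linarith
  have hKi : ∀ i, 1 + ‖y i‖ ≤ K := by
    intro i
    have : ‖y i‖ ≤ ∑ j, ‖y j‖ :=
      Finset.single_le_sum (fun j _ => norm_nonneg (y j)) (Finset.mem_univ i)
    simp only [hK]; linarith
  set D : ℝ := 2 * C * K ^ γ with hD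
  have hD0 : 0 ≤ D := by positivity
  set B : ℝ := 1 + D + |F 0| with hB
  have key : ∀ z : EuclideanSpace ℝ (Fin p), B ≤ ‖z‖ → F 0 ≤ F z := by
    intro z hz
    have hz1 : (1:ℝ) ≤ ‖z‖ := by
      have h0 : (0:ℝ) ≤ |F 0| := abs_nonneg _
      have : (1:ℝ) ≤ B := by simp only [hB]; linarith
      linarith
    have hS : ∑ i, g i * (1 + ⟪y i, z⟫) ^ γ ≤ C * (K * ‖z‖) ^ γ := by
      rw [hC, Finset.sum_mul]
      apply Finset.sum_le_sum
      intro i _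
      have h1 : |1 + ⟪y i, z⟫| ≤ K * ‖z‖ := by
        calc |1 + ⟪y i, z⟫| ≤ 1 + |⟪y i, z⟫| := by
              exact (abs_add_le _ _).trans (by simp)
          _ ≤ 1 + ‖y i‖ * ‖z‖ := by linarith [abs_real_inner_le_norm (y i) z]
          _ ≤ (1 + ‖y i‖) * ‖z‖ := by nlinarith [norm_nonneg (y i)]
          _ ≤ K * ‖z‖ := by nlinarith [hKi i, norm_nonneg z]
      calc g i * (1 + ⟪y i, z⟫) ^ γ ≤ |g i * (1 + ⟪y i, z⟫) ^ γ| := le_abs_self _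
        _ = |g i| * |1 + ⟪y i, z⟫| ^ γ := by simp [abs_mul, abs_pow]
        _ ≤ |g i| * (K * ‖z‖) ^ γ :=
            mul_le_mul_of_nonneg_left (pow_le_pow_left₀ (abs_nonneg _) h1 γ) (abs_nonneg _)
    have h2 : ‖z‖ ^ (2 * γ) ≤ (1 + ‖z‖ ^ 2) ^ γ := by
      rw [pow_mul]
      exact pow_le_pow_left₀ (by positivity) (by linarith [sq_nonneg ‖z‖]) γ
    have h3 : ‖z‖ ^ γ * (‖z‖ ^ γ - D) ≤ F z := by
      have hFz : (1 + ‖z‖ ^ 2) ^ γ - 2 * (C * (K * ‖z‖) ^ γ) ≤ F z := by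
        simp only [hF]; linarith
      have hpowmul : ‖z‖ ^ (2 * γ) = ‖z‖ ^ γ * ‖z‖ ^ γ := by
        rw [two_mul, pow_add]
      have hKz : (K * ‖z‖) ^ γ = K ^ γ * ‖z‖ ^ γ := mul_pow _ _ _
      calc ‖z‖ ^ γ * (‖z‖ ^ γ - D)
          = ‖z‖ ^ (2 * γ) - 2 * (C * (K * ‖z‖) ^ γ) := by
            rw [hpowmul, hKz, hD]; ring
        _ ≤ (1 + ‖z‖ ^ 2) ^ γ - 2 * (C * (K * ‖z‖) ^ γ) := by linarith
        _ ≤ F z := hFz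
    have h4 : B ≤ ‖z‖ ^ γ := le_trans hz (le_self_pow₀ (by linarith) (by omega))
    have h5 : 1 + |F 0| ≤ ‖z‖ ^ γ - D := by simp only [hB] at h4; linarith
    have h6 : (1:ℝ) ≤ ‖z‖ ^ γ := hz1.trans (le_self_pow₀ hz1 (by omega))
    nlinarith [abs_nonneg (F 0), le_abs_self (F 0)]
  have hev : ∀ᶠ z in Filter.cocompact (EuclideanSpace ℝ (Fin p)), F 0 ≤ F z :=
    (tendsto_norm_cocompact_atTop.eventually_ge_atTop B).mono fun z hz => key z hz
  obtain ⟨zs, hzs⟩ := hcont.exists_forall_le' 0 hev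
  exact ⟨zs, hzs⟩
end

section
/- Let H be a real inner product space, γ ∈ ℕ with γ ≥ 1, and let Ψ : ℝ^p → H be a map satisfying ⟨Ψ(y), Ψ(z)⟩_H = (1 + ⟨y,z⟩)^γ for all y, z ∈ ℝ^p (a feature map of the polynomial kernel). Then for any y_1, …, y_m ∈ ℝ^p and g ∈ ℝ^m, the function z ↦ ‖Σ_{i=1}^m g_i Ψ(y_i) − Ψ(z)‖_H^2 attains its infimum over ℝ^p. -/
open RealInnerProductSpace

/-- For a feature map `Ψ : ℝ^p → H` of the polynomial kernel
(`⟪Ψ y, Ψ z⟫ = (1 + ⟪y,z⟫)^γ`), the function `z ↦ ‖Σᵢ gᵢ Ψ(yᵢ) − Ψ z‖²`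
attains its infimum over `ℝ^p`. -/
theorem stmt7 {p m : ℕ} {H : Type*} [NormedAddCommGroup H] [InnerProductSpace ℝ H]
    (γ : ℕ) (hγ : 1 ≤ γ) (Ψ : EuclideanSpace ℝ (Fin p) → H)
    (hker : ∀ y z : EuclideanSpace ℝ (Fin p), ⟪Ψ y, Ψ z⟫ = (1 + ⟪y, z⟫) ^ γ)
    (y : Fin m → EuclideanSpace ℝ (Fin p)) (g : Fin m → ℝ) :
    ∃ zs : EuclideanSpace ℝ (Fin p), ∀ z : EuclideanSpace ℝ (Fin p),
      ‖(∑ i, g i • Ψ (y i)) - Ψ zs‖ ^ 2 ≤ ‖(∑ i, g i • Ψ (y i)) - Ψ z‖ ^ 2 := by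
  set η : H := ∑ i, g i • Ψ (y i) with hη
  set F : EuclideanSpace ℝ (Fin p) → ℝ :=
    fun z => ‖η‖ ^ 2 - 2 * (∑ i, g i * (1 + ⟪y i, z⟫) ^ γ) + (1 + ‖z‖ ^ 2) ^ γ with hF
  have hFeq : ∀ z, F z = ‖η - Ψ z‖ ^ 2 := by
    intro z
    have h1 : ⟪η, Ψ z⟫ = ∑ i, g i * (1 + ⟪y i, z⟫) ^ γ := by
      rw [hη, sum_inner]
      refine Finset.sum_congr rfl fun i _ => ?_
      rw [real_inner_smul_left, hker]
    have h2 : ‖Ψ z‖ ^ 2 = (1 + ‖z‖ ^ 2) ^ γ := by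
      rw [← real_inner_self_eq_norm_sq, hker, real_inner_self_eq_norm_sq]
    rw [@norm_sub_sq_real, h1, h2, hF]
  -- continuity of F
  have hcont : Continuous F := by
    rw [hF]
    refine ((continuous_const.sub (continuous_const.mul ?_)).add ?_)
    · exact continuous_finset_sum _ fun i _ =>
        (continuous_const.mul ((continuous_const.add ((continuous_const.inner continuous_id'))).pow γ))
    · exact (continuous_const.add ((continuous_norm).pow 2)).pow γ
  -- coercivity
  have hlow : ∀ z : EuclideanSpace ℝ (Fin p), ‖η‖ ≤ ‖z‖ → (‖z‖ - ‖η‖) ^ 2 ≤ F z := by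
    intro z hz
    rw [hFeq]
    have hΨ : ‖z‖ ≤ ‖Ψ z‖ := by
      have h2 : ‖z‖ ^ 2 ≤ ‖Ψ z‖ ^ 2 := by
        have : ‖Ψ z‖ ^ 2 = (1 + ‖z‖ ^ 2) ^ γ := by
          rw [← real_inner_self_eq_norm_sq, hker, real_inner_self_eq_norm_sq]
        rw [this]
        calc ‖z‖ ^ 2 ≤ 1 + ‖z‖ ^ 2 := by linarith
          _ = (1 + ‖z‖ ^ 2) ^ 1 := (pow_one _).symm
          _ ≤ (1 + ‖z‖ ^ 2) ^ γ := by
              apply pow_le_pow_right₀ _ hγ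
              nlinarith [sq_nonneg ‖z‖]
      exact (pow_le_pow_iff_left₀ (norm_nonneg _) (norm_nonneg _) two_ne_zero).mp h2
    have h3 : ‖z‖ - ‖η‖ ≤ ‖η - Ψ z‖ := by
      have := norm_sub_norm_le (Ψ z) η
      rw [norm_sub_rev] at this
      linarith
    have h4 : 0 ≤ ‖z‖ - ‖η‖ := by linarith
    exact pow_le_pow_left₀ h4 h3 2
  have hcoer : Filter.Tendsto F (Filter.cocompact _) Filter.atTop := by
    have hnorm : Filter.Tendsto (fun z : EuclideanSpace ℝ (Fin p) => ‖z‖)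
        (Filter.cocompact _) Filter.atTop := tendsto_norm_cocompact_atTop
    have haux : Filter.Tendsto (fun s : ℝ => (s - ‖η‖) ^ 2) Filter.atTop Filter.atTop := by
      exact (Filter.tendsto_pow_atTop (two_ne_zero)).comp
        (Filter.tendsto_atTop_add_const_right _ (-‖η‖) Filter.tendsto_id)
    refine Filter.tendsto_atTop_mono' _ ?_ (haux.comp hnorm)
    filter_upwards [hnorm.eventually_ge_atTop ‖η‖] with z hz
    exact hlow z hz
  obtain ⟨zs, hzs⟩ := hcont.exists_forall_le hcoer
  refine ⟨zs, fun z => ?_⟩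
  have := hzs z
  rw [hFeq, hFeq] at this
  exact this
end
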